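/- Let V be a complex inner product space of finite complex dimension n ≥ 2 and R a Kähler curvature form on V with positive orthogonal bisectional curvature. Then for any orthonormal basis e_1, …, e_n of V the scalar curvature is positive: Σ_{α=1}^{n} Σ_{β=1}^{n} Re R(e_α, e_α, e_β, e_β) > 0. -/

import Mathlib

/-- A Kähler curvature form on a complex inner product space `V`: a map
`R : V → V → V → V → ℂ` that is complex-linear in the first and third
arguments, conjugate-linear in the second and fourth arguments, and satisfies
the Kähler symmetries. -/
structure KahlerCurvatureForm (V : Type*) [NormedAddCommGroup V]
    [InnerProductSpace ℂ V] where
  R : V → V → V → V → ℂ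
  add_fst : ∀ x x' y z w, R (x + x') y z w = R x y z w + R x' y z w
  smul_fst : ∀ (c : ℂ) x y z w, R (c • x) y z w = c * R x y z w
  add_snd : ∀ x y y' z w, R x (y + y') z w = R x y z w + R x y' z w
  smul_snd : ∀ (c : ℂ) x y z w, R x (c • y) z w = (starRingEnd ℂ) c * R x y z w
  add_trd : ∀ x y z z' w, R x y (z + z') w = R x y z w + R x y z' w
  smul_trd : ∀ (c : ℂ) x y z w, R x y (c • z) w = c * R x y z w
  add_fth : ∀ x y z w w', R x y z (w + w') = R x y z w + R x y z w'
  smul_fth : ∀ (c : ℂ) x y z w, R x y z (c • w) = (starRingEnd ℂ) c * R x y z w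
  sym_fst_trd : ∀ x y z w, R x y z w = R z y x w
  sym_snd_fth : ∀ x y z w, R x y z w = R x w z y
  conj_sym : ∀ x y z w, R x y z w = (starRingEnd ℂ) (R y x w z)

/-- `R` has positive orthogonal bisectional curvature if `Re R(x,x,y,y) > 0`
for all nonzero orthogonal vectors `x, y`. -/
def KahlerCurvatureForm.PosOrthBisectional {V : Type*} [NormedAddCommGroup V]
    [InnerProductSpace ℂ V] (R : KahlerCurvatureForm V) : Prop :=
  ∀ x y : V, x ≠ 0 → y ≠ 0 → inner ℂ x y = (0 : ℂ) → 0 < (R.R x x y y).re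

/-!
Off-diagonal terms are orthogonal bisectional curvatures, hence positive. For the diagonal, if
`x ⊥ y` and `‖x‖ = ‖y‖`, then `x + y ⊥ x - y` and `x + i y ⊥ x - i y`, and the Kähler symmetries give
`R(x+y, x+y, x-y, x-y) + R(x+iy, x+iy, x-iy, x-iy) = 2 R(x,x,x,x) + 2 R(y,y,y,y)`.
So any two diagonal terms have positive sum, which makes the diagonal sum positive once `n ≥ 2`.
-/

open Complex

section Orthogonal

variable {V : Type*} [NormedAddCommGroup V] [InnerProductSpace ℂ V] {x z : V}

theorem add_ne_zero_of_inner_eq_zero (hx : x ≠ 0) (hxz : inner ℂ x z = 0) : x + z ≠ 0 := by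
  intro h
  have := congrArg (inner ℂ x) h
  rw [inner_add_right, hxz, add_zero, inner_zero_right] at this
  exact hx (inner_self_eq_zero.mp this)

theorem sub_ne_zero_of_inner_eq_zero (hx : x ≠ 0) (hxz : inner ℂ x z = 0) : x - z ≠ 0 := by
  rw [sub_eq_add_neg]
  exact add_ne_zero_of_inner_eq_zero hx (by rw [inner_neg_right, hxz, neg_zero])

theorem inner_add_sub_eq_zero_of_inner_eq_zero (hxz : inner ℂ x z = 0) (hnorm : ‖x‖ = ‖z‖) :
    inner ℂ (x + z) (x - z) = 0 := by
  have hzx : inner ℂ z x = 0 := inner_eq_zero_symm.mp hxz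
  rw [inner_add_left, inner_sub_right, inner_sub_right, hxz, hzx,
    inner_self_eq_norm_sq_to_K, inner_self_eq_norm_sq_to_K, hnorm]
  ring

end Orthogonal

namespace KahlerCurvatureForm

variable {V : Type*} [NormedAddCommGroup V] [InnerProductSpace ℂ V] (R : KahlerCurvatureForm V)

theorem add_sub_polarization (x y : V) :
    R.R (x + y) (x + y) (x - y) (x - y)
      + R.R (x + I • y) (x + I • y) (x - I • y) (x - I • y)
    = 2 * R.R x x x x + 2 * R.R y y y y := by
  rw [sub_eq_add_neg x y, sub_eq_add_neg x (I • y), ← neg_one_smul ℂ y, ← neg_smul]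
  simp only [R.add_fst, R.add_snd, R.add_trd, R.add_fth, R.smul_fst, R.smul_snd, R.smul_trd,
    R.smul_fth, map_neg, map_one, conj_I]
  rw [R.sym_snd_fth x x x y, R.sym_fst_trd y y x y, R.sym_fst_trd x x y x, R.sym_snd_fth y y y x,
    R.sym_fst_trd x x y y, R.sym_fst_trd y y x x]
  ring_nf
  simp only [I_sq, I_pow_four]
  ring

variable {R}

theorem PosOrthBisectional.re_add_sub_pos (hR : R.PosOrthBisectional) {x z : V} (hx : x ≠ 0)
    (hxz : inner ℂ x z = 0) (hnorm : ‖x‖ = ‖z‖) :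
    0 < (R.R (x + z) (x + z) (x - z) (x - z)).re :=
  hR _ _ (add_ne_zero_of_inner_eq_zero hx hxz) (sub_ne_zero_of_inner_eq_zero hx hxz)
    (inner_add_sub_eq_zero_of_inner_eq_zero hxz hnorm)

theorem PosOrthBisectional.re_add_re_pos (hR : R.PosOrthBisectional) {x y : V} (hx : x ≠ 0)
    (hxy : inner ℂ x y = 0) (hnorm : ‖x‖ = ‖y‖) :
    0 < (R.R x x x x).re + (R.R y y y y).re := by
  have hreal := hR.re_add_sub_pos hx hxy hnorm
  have himag := hR.re_add_sub_pos (z := I • y) hx (by rw [inner_smul_right, hxy, mul_zero])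
    (by rw [norm_smul, norm_I, one_mul, hnorm])
  have hpolar := congrArg re (R.add_sub_polarization x y)
  simp only [add_re, mul_re, re_ofNat, im_ofNat, zero_mul, sub_zero] at hpolar
  linarith

end KahlerCurvatureForm

section FiniteSums

variable {ι : Type*} [Fintype ι]

theorem Finset.sum_pos_of_pairwise_add_pos [Nontrivial ι] {f : ι → ℝ}
    (hf : ∀ i j, i ≠ j → 0 < f i + f j) : 0 < ∑ i, f i := by
  classical
  -- every value other than the minimum `f i` is positive
  obtain ⟨i, hmin⟩ := Finite.exists_min f
  obtain ⟨j, hji⟩ := exists_ne i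
  have hpos : ∀ k ∈ univ.erase i, 0 ≤ f k := fun k hk => by
    linarith [hf i k (Ne.symm (ne_of_mem_erase hk)), hmin k]
  calc 0 < f i + f j := hf i j hji.symm
    _ ≤ f i + ∑ k ∈ univ.erase i, f k := by
      gcongr
      exact single_le_sum hpos (mem_erase.mpr ⟨hji, mem_univ j⟩)
    _ = ∑ k, f k := add_sum_erase _ _ (mem_univ i)

theorem Finset.sum_sum_pos_of_offDiag_pos [Nontrivial ι] {T : ι → ι → ℝ}
    (hoff : ∀ i j, i ≠ j → 0 < T i j) (hdiag : ∀ i j, i ≠ j → 0 < T i i + T j j) :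
    0 < ∑ i, ∑ j, T i j := by
  classical
  refine (sum_pos_of_pairwise_add_pos hdiag).trans_le (sum_le_sum fun i _ => ?_)
  rw [← add_sum_erase _ _ (mem_univ i), le_add_iff_nonneg_right]
  exact sum_nonneg fun j hj => (hoff i j (ne_of_mem_erase hj).symm).le

end FiniteSums

theorem stmt4 {V : Type*} [NormedAddCommGroup V] [InnerProductSpace ℂ V]
    {n : ℕ} (hn : 2 ≤ n)
    (R : KahlerCurvatureForm V) (hR : R.PosOrthBisectional)
    (e : OrthonormalBasis (Fin n) ℂ V) :
    0 < ∑ α : Fin n, ∑ β : Fin n, (R.R (e α) (e α) (e β) (e β)).re := by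
  have : Nontrivial (Fin n) := Fin.nontrivial_iff_two_le.mpr hn
  have horth : ∀ α β, α ≠ β → inner ℂ (e α) (e β) = 0 := fun α β h => e.orthonormal.2 h
  refine Finset.sum_sum_pos_of_offDiag_pos (fun α β h => ?_) (fun α β h => ?_)
  · exact hR _ _ (e.orthonormal.ne_zero α) (e.orthonormal.ne_zero β) (horth α β h)
  · exact hR.re_add_re_pos (e.orthonormal.ne_zero α) (horth α β h)
      (by rw [e.orthonormal.1 α, e.orthonormal.1 β])
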